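/- Let γ > 2, β > 0 and p > 0, and let ū be the unique solution in (0,1) of γ − 1 − γu = exp(−β((1+u)^{−p} − 1)). Then f(ū) = 0 and f'(ū) < 0, where f(u) = γ·h(u)·u(1−u) − u with h(u) = 1/(1 + exp(−β((1+u)^{−p} − 1))). -/

import Mathlib

/-!
`h` is the sigmoid of `u ↦ β((1+u)^{-p} - 1)`, which decreases on `(-1, ∞)`, so `h' ≤ 0` there.
The equation defining `ū` says exactly that `γ h(ū) (1 - ū) = 1`. Hence `f(ū) = ū (γ h(ū)(1 - ū) - 1) = 0`,
and in `f'(ū) = γ h'(ū) ū (1 - ū) + γ h(ū) (1 - 2ū) - 1` the last two terms collapse to `-γ h(ū) ū < 0`.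
-/

open Real

/-- The switch function `h(u) = 1/(1 + exp(−β((1+u)^{−p} − 1)))`. -/
noncomputable def hfun (β p u : ℝ) : ℝ :=
  1 / (1 + Real.exp (-(β * ((1 + u) ^ (-p) - 1))))

/-- The reaction term `f(u) = γ h(u) u (1−u) − u`. -/
noncomputable def ffun (γ β p u : ℝ) : ℝ :=
  γ * hfun β p u * u * (1 - u) - u

lemma hfun_eq_sigmoid (β p u : ℝ) : hfun β p u = sigmoid (β * ((1 + u) ^ (-p) - 1)) := by
  rw [hfun, sigmoid_def, one_div]

lemma hfun_pos (β p u : ℝ) : 0 < hfun β p u :=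
  hfun_eq_sigmoid β p u ▸ sigmoid_pos _

lemma hasDerivAt_hfun {β p u : ℝ} (hu : -1 < u) :
    HasDerivAt (hfun β p)
      (hfun β p u * (1 - hfun β p u) * (β * (-p * (1 + u) ^ (-p - 1)))) u := by
  have hpow : HasDerivAt (fun v : ℝ => (1 + v) ^ (-p)) (-p * (1 + u) ^ (-p - 1)) u := by
    simpa using
      ((hasDerivAt_id u).const_add 1).rpow_const (p := -p) (Or.inl (by rw [id]; linarith))
  have hexp := (hasDerivAt_sigmoid _).comp u ((hpow.sub_const 1).const_mul β)
  simp only [← hfun_eq_sigmoid] at hexp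
  exact hexp.congr_of_eventuallyEq (.of_forall fun v => hfun_eq_sigmoid β p v)

lemma deriv_hfun_nonpos {β p u : ℝ} (hβ : 0 ≤ β) (hp : 0 ≤ p) (hu : -1 < u) :
    deriv (hfun β p) u ≤ 0 := by
  rw [(hasDerivAt_hfun hu).deriv]
  have hh : 0 ≤ hfun β p u * (1 - hfun β p u) := by
    rw [hfun_eq_sigmoid]
    exact mul_nonneg (sigmoid_nonneg _) (sub_nonneg.mpr (sigmoid_le_one _))
  have hpow : 0 ≤ (1 + u) ^ (-p - 1) := rpow_nonneg (by linarith) _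
  exact mul_nonpos_of_nonneg_of_nonpos hh
    (mul_nonpos_of_nonneg_of_nonpos hβ (by nlinarith))

lemma hasDerivAt_ffun (γ : ℝ) {β p u : ℝ} (hu : -1 < u) :
    HasDerivAt (ffun γ β p)
      (γ * deriv (hfun β p) u * u * (1 - u) + γ * hfun β p u * (1 - 2 * u) - 1) u := by
  have hh := (hasDerivAt_hfun (β := β) (p := p) hu).differentiableAt.hasDerivAt
  have hf := (((hh.const_mul γ).mul (hasDerivAt_id u)).mul
    ((hasDerivAt_id u).const_sub 1)).sub (hasDerivAt_id u)
  exact hf.congr_deriv (by simp only [Pi.mul_apply, id]; ring)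

lemma mul_hfun_mul_one_sub_eq_one {γ β p u : ℝ}
    (h : γ - 1 - γ * u = exp (-(β * ((1 + u) ^ (-p) - 1)))) :
    γ * hfun β p u * (1 - u) = 1 := by
  have hden : 1 + exp (-(β * ((1 + u) ^ (-p) - 1))) = γ * (1 - u) := by rw [← h]; ring
  have hne : γ * (1 - u) ≠ 0 := hden ▸ (by positivity)
  rw [hfun, hden]
  field_simp
  exact div_self hne

theorem ffun_zero_and_deriv_neg_at_ub_general
    (γ β p : ℝ) (hβ : 0 < β) (hp : 0 < p)
    (ub : ℝ) (hub : ub ∈ Set.Ioo (0 : ℝ) 1)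
    (hub_eq : γ - 1 - γ * ub = Real.exp (-(β * ((1 + ub) ^ (-p) - 1)))) :
    ffun γ β p ub = 0 ∧ deriv (ffun γ β p) ub < 0 := by
  obtain ⟨hub0, hub1⟩ := hub
  have hkey := mul_hfun_mul_one_sub_eq_one hub_eq
  refine ⟨by rw [ffun]; linear_combination ub * hkey, ?_⟩
  rw [(hasDerivAt_ffun γ (by linarith : -1 < ub)).deriv]
  have hγh : 0 < γ * hfun β p ub :=
    pos_of_mul_pos_left (by rw [hkey]; exact one_pos) (sub_nonneg.mpr hub1.le)
  have hγ : 0 < γ := pos_of_mul_pos_left hγh (hfun_pos β p ub).le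
  have hslope : 0 ≤ γ * -deriv (hfun β p) ub * ub * (1 - ub) :=
    mul_nonneg (mul_nonneg (mul_nonneg hγ.le
      (neg_nonneg.mpr (deriv_hfun_nonpos hβ.le hp.le (by linarith)))) hub0.le)
      (sub_nonneg.mpr hub1.le)
  have hlevel : 0 < γ * hfun β p ub * ub := mul_pos hγh hub0
  linarith

/-- at the excited state `ū` one has `f(ū) = 0` and `f'(ū) < 0`. -/
theorem ffun_zero_and_deriv_neg_at_ub
    (γ β p : ℝ) (hγ : 2 < γ) (hβ : 0 < β) (hp : 0 < p)
    (ub : ℝ) (hub : ub ∈ Set.Ioo (0 : ℝ) 1)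
    (hub_eq : γ - 1 - γ * ub = Real.exp (-(β * ((1 + ub) ^ (-p) - 1)))) :
    ffun γ β p ub = 0 ∧ deriv (ffun γ β p) ub < 0 :=
  ffun_zero_and_deriv_neg_at_ub_general γ β p hβ hp ub hub hub_eq
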